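/- Let Z be a compact metrizable totally disconnected space with an action of a group Γ by homeomorphisms, and suppose the quotient C(Z,ℤ)_Γ of coinvariants, tensored with ℝ, is a one-dimensional real vector space. Then there is at most one Γ-invariant Borel probability measure on Z. -/

import Mathlib

/-!
Integration against a `Γ`-invariant probability measure is an additive map `C(Z, ℤ) → ℝ` that
kills the coinvariants subgroup, so it extends to an `ℝ`-linear functional on the line
`ℝ ⊗ C(Z, ℤ)_Γ` taking the value `1` at `1 ⊗ [1_Z]`; such a functional is unique. Hence two
invariant probability measures agree on all clopen sets, which form a π-system generating the
Borel σ-algebra of a compact metrizable totally disconnected space.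
-/

open MeasureTheory
open scoped TensorProduct

def coinvariantsSubgroup (Γ Z : Type*) [Group Γ] [TopologicalSpace Z] [MulAction Γ Z]
    [ContinuousConstSMul Γ Z] : AddSubgroup C(Z, ℤ) :=
  AddSubgroup.closure
    {g | ∃ (f : C(Z, ℤ)) (γ : Γ),
      g = f - f.comp ⟨fun z => γ⁻¹ • z, continuous_const_smul γ⁻¹⟩}

theorem AddMonoidHom.eq_of_finrank_baseChange_eq_one {K M : Type*} [Field K] [AddCommGroup M]
    (hM : Module.finrank K (K ⊗[ℤ] M) = 1) {φ ψ : M →+ K} {m : M} (hm : φ m ≠ 0)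
    (hφψ : φ m = ψ m) : φ = ψ := by
  let Lφ := φ.toIntLinearMap.liftBaseChange K
  let Lψ := ψ.toIntLinearMap.liftBaseChange K
  have hLφ (x : M) : Lφ (1 ⊗ₜ x) = φ x := by simp [Lφ]
  have hLψ (x : M) : Lψ (1 ⊗ₜ x) = ψ x := by simp [Lψ]
  have hne : (1 : K) ⊗ₜ[ℤ] m ≠ 0 := fun h => hm (by rw [← hLφ, h, map_zero])
  have hspan := (finrank_eq_one_iff_of_nonzero' _ hne).mp hM
  ext x
  obtain ⟨c, hc⟩ := hspan (1 ⊗ₜ x)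
  rw [← hLφ, ← hLψ, ← hc, map_smul, map_smul, hLφ, hLψ, hφψ]

section IntegerValued

variable {Z : Type*} [TopologicalSpace Z] [CompactSpace Z] [MeasurableSpace Z]
  [OpensMeasurableSpace Z]

theorem ContinuousMap.integrable_intCast (f : C(Z, ℤ)) (μ : Measure Z) [IsFiniteMeasure μ] :
    Integrable (fun z => (f z : ℝ)) μ :=
  (continuous_of_discreteTopology.comp f.continuous).integrable_of_hasCompactSupport
    (HasCompactSupport.of_compactSpace _)

noncomputable def integralAddHom (μ : Measure Z) [IsFiniteMeasure μ] : C(Z, ℤ) →+ ℝ :=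
  AddMonoidHom.mk' (fun f => ∫ z, (f z : ℝ) ∂μ) fun f g => by
    simp only [ContinuousMap.add_apply, Int.cast_add]
    exact integral_add (f.integrable_intCast μ) (g.integrable_intCast μ)

theorem integralAddHom_apply (μ : Measure Z) [IsFiniteMeasure μ] (f : C(Z, ℤ)) :
    integralAddHom μ f = ∫ z, (f z : ℝ) ∂μ :=
  rfl

theorem integralAddHom_charFn (μ : Measure Z) [IsFiniteMeasure μ] {A : Set Z}
    (hA : IsClopen A) : integralAddHom μ (LocallyConstant.charFn ℤ hA) = μ.real A := by
  have : (fun z => ((LocallyConstant.charFn ℤ hA : C(Z, ℤ)) z : ℝ)) = A.indicator 1 := by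
    ext z
    by_cases hz : z ∈ A <;> simp [hz, LocallyConstant.coe_charFn]
  rw [integralAddHom_apply, this, integral_indicator_one hA.isOpen.measurableSet]

end IntegerValued

theorem measurePreserving_smul_of_measure_smul_image {Γ Z : Type*} [Group Γ]
    [TopologicalSpace Z] [MeasurableSpace Z] [BorelSpace Z] [MulAction Γ Z]
    [ContinuousConstSMul Γ Z] {μ : Measure Z}
    (hμ : ∀ (γ : Γ) (A : Set Z), MeasurableSet A → μ ((γ • ·) '' A) = μ A) (γ : Γ) :
    MeasurePreserving (γ • · : Z → Z) μ μ := by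
  refine ⟨(continuous_const_smul γ).measurable, Measure.ext fun A hA => ?_⟩
  rw [Measure.map_apply (continuous_const_smul γ).measurable hA, Set.preimage_smul,
    ← Set.image_smul, hμ γ⁻¹ A hA]

theorem coinvariantsSubgroup_le_ker_integralAddHom {Γ Z : Type*} [Group Γ]
    [TopologicalSpace Z] [CompactSpace Z] [MeasurableSpace Z] [BorelSpace Z] [MulAction Γ Z]
    [ContinuousConstSMul Γ Z] {μ : Measure Z} [IsFiniteMeasure μ]
    (hμ : ∀ (γ : Γ) (A : Set Z), MeasurableSet A → μ ((γ • ·) '' A) = μ A) :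
    coinvariantsSubgroup Γ Z ≤ (integralAddHom μ).ker := by
  refine (AddSubgroup.closure_le _).mpr ?_
  rintro _ ⟨f, γ, rfl⟩
  have hγ := measurePreserving_smul_of_measure_smul_image hμ γ⁻¹
  have hemb : MeasurableEmbedding (γ⁻¹ • · : Z → Z) :=
    (Homeomorph.smul γ⁻¹).measurableEmbedding
  simp only [SetLike.mem_coe, AddMonoidHom.mem_ker, map_sub, integralAddHom_apply,
    ContinuousMap.comp_apply, ContinuousMap.coe_mk]
  rw [hγ.integral_comp hemb fun z => (f z : ℝ), sub_self]

theorem MeasureTheory.Measure.ext_of_isClopen {Z : Type*} [TopologicalSpace Z] [T2Space Z]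
    [CompactSpace Z] [TotallyDisconnectedSpace Z] [SecondCountableTopology Z] [MeasurableSpace Z]
    [BorelSpace Z] {μ ν : Measure Z} [IsFiniteMeasure μ]
    (h : ∀ A : Set Z, IsClopen A → μ A = ν A) : μ = ν := by
  refine ext_of_generate_finite {A | IsClopen A} ?_ (fun A hA B hB _ => hA.inter hB) h
    (h _ isClopen_univ)
  rw [BorelSpace.measurable_eq (α := Z)]
  exact isTopologicalBasis_isClopen.borel_eq_generateFrom

/-- if the coinvariants `C(Z,ℤ)_Γ` tensored with `ℝ` form a one-dimensional
real vector space, then there is at most one `Γ`-invariant Borel probability measure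
on `Z`. -/
theorem stmt16 (Γ Z : Type*) [Group Γ] [MetricSpace Z] [CompactSpace Z]
    [TotallyDisconnectedSpace Z] [MeasurableSpace Z] [BorelSpace Z]
    [MulAction Γ Z] [ContinuousConstSMul Γ Z]
    (hrank : Module.finrank ℝ (ℝ ⊗[ℤ] (C(Z, ℤ) ⧸ coinvariantsSubgroup Γ Z)) = 1) :
    ∀ μ ν : Measure Z, IsProbabilityMeasure μ → IsProbabilityMeasure ν →
      (∀ (γ : Γ) (A : Set Z), MeasurableSet A → μ ((γ • ·) '' A) = μ A) →
      (∀ (γ : Γ) (A : Set Z), MeasurableSet A → ν ((γ • ·) '' A) = ν A) →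
      μ = ν := by
  intro μ ν _ _ hμ hν
  let φ := QuotientAddGroup.lift _ _ (coinvariantsSubgroup_le_ker_integralAddHom hμ)
  let ψ := QuotientAddGroup.lift _ _ (coinvariantsSubgroup_le_ker_integralAddHom hν)
  have hφψ : φ = ψ := by
    refine AddMonoidHom.eq_of_finrank_baseChange_eq_one hrank (m := (1 : C(Z, ℤ))) ?_ ?_ <;>
      simp [φ, ψ, integralAddHom_apply]
  refine Measure.ext_of_isClopen fun A hA => ?_
  have hA := DFunLike.congr_fun hφψ
    ((LocallyConstant.charFn ℤ hA : C(Z, ℤ)) : C(Z, ℤ) ⧸ coinvariantsSubgroup Γ Z)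
  simp only [φ, ψ, QuotientAddGroup.lift_mk, integralAddHom_charFn] at hA
  exact (ENNReal.toReal_eq_toReal_iff' (measure_ne_top μ A) (measure_ne_top ν A)).mp hA
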